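/- Let P be an N×N row-stochastic matrix with stationary distribution ψ, Ψ := diag(ψ), let Φ be an N×d real matrix of full column rank, let μ > 0 be the smallest eigenvalue of ΦᵀΨΦ, and let β ∈ (0,1). Then the matrix A := ΦᵀΨ(I − βP)Φ satisfies xᵀAx ≥ μ(1−β)‖x‖₂² for every x ∈ ℝ^d; in particular A − μ(1−β)I is positive semidefinite. -/
import Mathlib


open Finset Matrix

lemma td_cross_bound {N : ℕ} (P : Matrix (Fin N) (Fin N) ℝ)
    (hP0 : ∀ s s', 0 ≤ P s s') (hP1 : ∀ s, ∑ s', P s s' = 1)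
    (ψ : Fin N → ℝ) (hψ0 : ∀ s, 0 ≤ ψ s)
    (hstat : ∀ s', ∑ s, ψ s * P s s' = ψ s') (v : Fin N → ℝ) :
    ∑ s, ∑ s', ψ s * P s s' * (v s * v s') ≤ ∑ s, ψ s * v s ^ 2 := by
  have h1 : ∑ s, ∑ s', ψ s * P s s' * (v s * v s')
      ≤ ∑ s, ∑ s', ψ s * P s s' * ((v s ^ 2 + v s' ^ 2) / 2) := by
    refine Finset.sum_le_sum fun s _ => Finset.sum_le_sum fun s' _ => ?_
    have h := mul_nonneg (hψ0 s) (hP0 s s')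
    nlinarith [sq_nonneg (v s - v s')]
  have hA : ∑ s, ∑ s', ψ s * P s s' * v s ^ 2 = ∑ s, ψ s * v s ^ 2 := by
    refine Finset.sum_congr rfl fun s _ => ?_
    have : ∑ s', ψ s * P s s' * v s ^ 2 = (ψ s * v s ^ 2) * ∑ s', P s s' := by
      rw [Finset.mul_sum]; exact Finset.sum_congr rfl fun s' _ => by ring
    rw [this, hP1 s, mul_one]
  have hB : ∑ s, ∑ s', ψ s * P s s' * v s' ^ 2 = ∑ s, ψ s * v s ^ 2 := by
    rw [Finset.sum_comm]
    refine Finset.sum_congr rfl fun s' _ => ?_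
    have : ∑ s, ψ s * P s s' * v s' ^ 2 = (∑ s, ψ s * P s s') * v s' ^ 2 := by
      rw [Finset.sum_mul]
    rw [this, hstat s']
  calc ∑ s, ∑ s', ψ s * P s s' * (v s * v s')
      ≤ ∑ s, ∑ s', ψ s * P s s' * ((v s ^ 2 + v s' ^ 2) / 2) := h1
    _ = (∑ s, ∑ s', ψ s * P s s' * v s ^ 2
          + ∑ s, ∑ s', ψ s * P s s' * v s' ^ 2) / 2 := by
        simp_rw [add_div, mul_add, ← mul_div_assoc, Finset.sum_add_distrib,
          Finset.sum_div]
    _ = ∑ s, ψ s * v s ^ 2 := by rw [hA, hB]; ring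

/-- **Positive definiteness of the TD(0) matrix `A = ΦᵀΨ(I − βP)Φ`.**
Let `P` be an `N×N` row-stochastic matrix with stationary distribution `ψ`,
`Ψ := diag ψ`, let `Φ` be an `N×d` matrix of full column rank, let `μ > 0` be
the smallest eigenvalue of `ΦᵀΨΦ` (encoded through the quadratic-form lower
bound `∀ x, μ‖x‖₂² ≤ xᵀ(ΦᵀΨΦ)x`), and let `β ∈ (0,1)`.  Then
`A := ΦᵀΨ(I − βP)Φ` satisfies `xᵀAx ≥ μ(1−β)‖x‖₂²` for every `x : Fin d → ℝ`;
in particular `A − μ(1−β)I` is positive semidefinite. -/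
theorem td_matrix_posdef
    {N d : ℕ} (P : Matrix (Fin N) (Fin N) ℝ)
    (hP0 : ∀ s s', 0 ≤ P s s') (hP1 : ∀ s, ∑ s', P s s' = 1)
    (ψ : Fin N → ℝ) (hψ0 : ∀ s, 0 ≤ ψ s) (hψ1 : ∑ s, ψ s = 1)
    (hstat : ∀ s', ∑ s, ψ s * P s s' = ψ s')
    (Φ : Matrix (Fin N) (Fin d) ℝ) (hrank : Φ.rank = d)
    (μ : ℝ) (hμpos : 0 < μ)
    (hμ : ∀ x : Fin d → ℝ, μ * (∑ i, x i ^ 2) ≤ x ⬝ᵥ ((Φᵀ * Matrix.diagonal ψ * Φ).mulVec x))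
    (β : ℝ) (hβ : β ∈ Set.Ioo (0 : ℝ) 1) (x : Fin d → ℝ) :
    μ * (1 - β) * (∑ i, x i ^ 2)
      ≤ x ⬝ᵥ ((Φᵀ * Matrix.diagonal ψ * (1 - β • P) * Φ).mulVec x) := by
  obtain ⟨hβ0, hβ1⟩ := hβ
  set v := Φ.mulVec x with hv
  -- quadratic forms
  have hq1 : x ⬝ᵥ ((Φᵀ * Matrix.diagonal ψ * Φ).mulVec x) = ∑ s, ψ s * v s ^ 2 := by
    rw [Matrix.mul_assoc, ← Matrix.mulVec_mulVec, Matrix.dotProduct_mulVec,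
      Matrix.vecMul_transpose, ← Matrix.mulVec_mulVec]
    simp [Matrix.mulVec_diagonal, dotProduct, hv]
    exact Finset.sum_congr rfl fun s _ => by ring
  have hq2 : x ⬝ᵥ ((Φᵀ * Matrix.diagonal ψ * P * Φ).mulVec x)
      = ∑ s, ∑ s', ψ s * P s s' * (v s * v s') := by
    rw [Matrix.mul_assoc, Matrix.mul_assoc, ← Matrix.mulVec_mulVec,
      Matrix.dotProduct_mulVec, Matrix.vecMul_transpose,
      ← Matrix.mulVec_mulVec, ← Matrix.mulVec_mulVec, ← hv]
    simp only [dotProduct, Matrix.mulVec_diagonal]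
    refine Finset.sum_congr rfl fun s _ => ?_
    simp only [Matrix.mulVec, dotProduct, Finset.mul_sum]
    refine Finset.sum_congr rfl fun s' _ => by ring
  have hsplit : x ⬝ᵥ ((Φᵀ * Matrix.diagonal ψ * (1 - β • P) * Φ).mulVec x)
      = x ⬝ᵥ ((Φᵀ * Matrix.diagonal ψ * Φ).mulVec x)
        - β * (x ⬝ᵥ ((Φᵀ * Matrix.diagonal ψ * P * Φ).mulVec x)) := by
    have : Φᵀ * Matrix.diagonal ψ * (1 - β • P) * Φ
        = Φᵀ * Matrix.diagonal ψ * Φ - β • (Φᵀ * Matrix.diagonal ψ * P * Φ) := by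
      rw [Matrix.mul_sub, Matrix.sub_mul, Matrix.mul_one]
      congr 1
      rw [Matrix.mul_smul, Matrix.smul_mul]
    rw [this, Matrix.sub_mulVec, dotProduct_sub, Matrix.smul_mulVec,
      dotProduct_smul, smul_eq_mul]
  have hcross := td_cross_bound P hP0 hP1 ψ hψ0 hstat v
  have hμx := hμ x
  rw [hq1] at hμx
  have hΨv : 0 ≤ ∑ s, ψ s * v s ^ 2 :=
    Finset.sum_nonneg fun s _ => mul_nonneg (hψ0 s) (sq_nonneg _)
  rw [hsplit, hq1, hq2]
  nlinarith [hcross, hμx, hΨv]
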